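/- arXiv:1710.03904 — 6 statements merged into one kernel-verified Lean document; each statement's English description precedes it below -/
import Mathlib

section
/- If ε is symmetrically distributed about 0 conditionally on X (i.e., conditionally on X, ε and -ε have the same distribution and P(ε ≥ 0 | X) = P(ε ≤ 0 | X) = 1/2 when ε has no atom at 0, or more generally P(ε ≤ 0|X) ≥ 1/2 and P(ε ≥ 0|X) ≥ 1/2), then for every unit vector u ∈ S^d, P(uᵀ(Y - Wᵀθ₀)W ≤ 0) ≥ 1/2, i.e., (X,Y) is regression halfspace symmetric about θ₀. -/
open MeasureTheory Matrix

/-!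
The residual term is `ε * g` with `g = uᵀW` a function of `X`. It is `≤ 0` on
`{ε ≤ 0} ∩ {g ≥ 0}` and on `{ε ≥ 0} ∩ {g < 0}`. Both `{g ≥ 0}` and `{g < 0}` are
`X`-measurable, so integrating the conditional bounds over them shows that these two
disjoint events have probabilities at least `½ P(g ≥ 0)` and `½ P(g < 0)`, which add up to `½`.
-/

section

variable {Ω : Type*} {m m₀ : MeasurableSpace Ω} {μ : Measure[m₀] Ω}

theorem mul_measureReal_le_measureReal_inter_of_le_condExp [IsFiniteMeasure μ] (hm : m ≤ m₀)
    {S C : Set Ω} (hS : MeasurableSet[m₀] S) (hC : MeasurableSet[m] C) {c : ℝ}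
    (hc : ∀ᵐ ω ∂μ, c ≤ μ[S.indicator 1 | m] ω) :
    c * μ.real C ≤ μ.real (S ∩ C) :=
  calc c * μ.real C = ∫ _ in C, c ∂μ := by rw [setIntegral_const, smul_eq_mul, mul_comm]
    _ ≤ ∫ ω in C, μ[S.indicator 1 | m] ω ∂μ :=
      integral_mono_ae (integrable_const c) integrable_condExp.integrableOn
        (ae_restrict_of_ae hc)
    _ = ∫ ω in C, S.indicator 1 ω ∂μ :=
      setIntegral_condExp hm ((integrable_const 1).indicator hS) hC
    _ = μ.real (S ∩ C) := by
      rw [integral_indicator_one hS, measureReal_restrict_apply hS]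

theorem le_measureReal_mul_nonpos_of_le_condExp [IsProbabilityMeasure μ] (hm : m ≤ m₀)
    {e g : Ω → ℝ} (he : Measurable[m₀] e) (hg : Measurable[m] g) {c : ℝ}
    (hneg : ∀ᵐ ω ∂μ, c ≤ μ[{ω | e ω ≤ 0}.indicator 1 | m] ω)
    (hpos : ∀ᵐ ω ∂μ, c ≤ μ[{ω | 0 ≤ e ω}.indicator 1 | m] ω) :
    c ≤ μ.real {ω | e ω * g ω ≤ 0} := by
  set B := {ω | 0 ≤ g ω}
  have hB : MeasurableSet[m] B := measurableSet_le measurable_const hg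
  have hneg_B := mul_measureReal_le_measureReal_inter_of_le_condExp hm
    (measurableSet_le he measurable_const) hB hneg
  have hpos_Bc := mul_measureReal_le_measureReal_inter_of_le_condExp hm
    (measurableSet_le measurable_const he) hB.compl hpos
  have hdisj : Disjoint ({ω | e ω ≤ 0} ∩ B) ({ω | 0 ≤ e ω} ∩ Bᶜ) :=
    disjoint_compl_right.mono Set.inter_subset_right Set.inter_subset_right
  have hsub : {ω | e ω ≤ 0} ∩ B ∪ {ω | 0 ≤ e ω} ∩ Bᶜ ⊆ {ω | e ω * g ω ≤ 0} := by
    rintro ω (⟨he, hg⟩ | ⟨he, hg⟩) <;> show e ω * g ω ≤ 0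
    · exact mul_nonpos_of_nonpos_of_nonneg he hg
    · exact mul_nonpos_of_nonneg_of_nonpos he (le_of_not_ge hg)
  calc c = c * μ.real B + c * μ.real Bᶜ := by
        rw [← mul_add, measureReal_add_measureReal_compl (hm _ hB), probReal_univ, mul_one]
    _ ≤ μ.real ({ω | e ω ≤ 0} ∩ B ∪ {ω | 0 ≤ e ω} ∩ Bᶜ) := by
        rw [measureReal_union hdisj ((measurableSet_le measurable_const he).inter (hm _ hB).compl)]
        linarith
    _ ≤ μ.real {ω | e ω * g ω ≤ 0} := measureReal_mono hsub

end

theorem stmt6 {d : ℕ} {Ω : Type*} [MeasurableSpace Ω] (μ : Measure Ω) [IsProbabilityMeasure μ]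
    (X : Ω → Fin d → ℝ) (ε : Ω → ℝ) (Y : Ω → ℝ) (θ₀ : Fin (d + 1) → ℝ)
    (hX : Measurable X) (hε : Measurable ε)
    (W : Ω → Fin (d + 1) → ℝ) (hW : ∀ ω, W ω = Fin.cons 1 (X ω))
    (hY : ∀ ω, Y ω = W ω ⬝ᵥ θ₀ + ε ω)
    (hneg : ∀ᵐ ω ∂μ, (1 : ℝ) / 2 ≤
      (μ[Set.indicator {ω' | ε ω' ≤ 0} (fun _ => (1 : ℝ)) |
        MeasurableSpace.comap X inferInstance]) ω)
    (hpos : ∀ᵐ ω ∂μ, (1 : ℝ) / 2 ≤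
      (μ[Set.indicator {ω' | 0 ≤ ε ω'} (fun _ => (1 : ℝ)) |
        MeasurableSpace.comap X inferInstance]) ω) :
    ∀ u : Fin (d + 1) → ℝ, Real.sqrt (∑ i, u i ^ 2) = 1 →
      1 / 2 ≤ μ {ω | u ⬝ᵥ ((Y ω - W ω ⬝ᵥ θ₀) • W ω) ≤ 0} := by
  intro u _
  have hresidual : ∀ ω, u ⬝ᵥ ((Y ω - W ω ⬝ᵥ θ₀) • W ω) = ε ω * (u ⬝ᵥ W ω) := fun ω => by
    rw [hY ω, add_sub_cancel_left, dotProduct_smul, smul_eq_mul]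
  have hg : Measurable[MeasurableSpace.comap X inferInstance] fun ω => u ⬝ᵥ W ω := by
    simp only [hW]
    exact (by fun_prop : Measurable fun v : Fin d → ℝ => u ⬝ᵥ Fin.cons 1 v).comp
      (Measurable.of_comap_le le_rfl)
  have key := le_measureReal_mul_nonpos_of_le_condExp hX.comap_le hε hg hneg hpos
  simp only [hresidual]
  rw [← ENNReal.ofReal_ofNat 2, ← ENNReal.ofReal_one, ← ENNReal.ofReal_div_of_pos two_pos]
  exact ENNReal.ofReal_le_of_le_toReal key
end

section
/- Suppose for each t ∈ ℝ with t ≠ 0 and each x, P(ε ≤ t | X = x) as well as P(ε ≥ -t | X = x) are each strictly less than 1/2 or strictly greater than 1/2 appropriately so that strict inequality P(v_θᵀ(Y - Wᵀθ)W ≤ 0) < 1/2 holds: specifically, if X is continuous (so that P(v_θᵀW = 0) = 0 and P(v_θᵀW > 0) > 0 or P(v_θᵀW < 0) > 0 with strict conditional tail inequalities), then for any θ ≠ θ₀, with v_θ = (θ₀ - θ)/‖θ₀ - θ‖, P(v_θᵀ(Y - Wᵀθ)W ≤ 0) < 1/2; hence the regression halfspace symmetry center θ₀ is unique. -/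
open MeasureTheory Matrix

/-!
Put `c = ‖θ₀ - θ‖`, `v = (θ₀ - θ) / c` and `σ = vᵀW`. Then `vᵀ(Y - Wᵀθ)W = (cσ + ε)σ`, which is
`≤ 0` only if `ε ≤ -cσ < 0` (where `σ > 0`) or `ε ≥ -cσ > 0` (where `σ < 0`). By the conditional
symmetry of `ε`, the events `{σ > 0, ε ≤ 0}` and `{σ < 0, ε > 0}` carry half the mass of
`{σ > 0}` and `{σ < 0}`, so together at most `1/2`. The inequality is strict: for some `q > 0`
the event `{σ > q, -cq < ε ≤ 0}` lies in the first of them, misses ours, and has positive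
probability because the conditional density is positive. If instead only `{σ < 0}` has positive
mass, replace `(σ, ε)` by `(-σ, -ε)`.
-/

def HasCondDensity {α Ω : Type*} [MeasurableSpace α] [MeasurableSpace Ω] (μ : Measure Ω)
    (X : Ω → α) (ε : Ω → ℝ) (f : α → ℝ → ℝ) : Prop :=
  ∀ A : Set α, ∀ B : Set ℝ, MeasurableSet A → MeasurableSet B →
    μ {ω | X ω ∈ A ∧ ε ω ∈ B} = ENNReal.ofReal (∫ x in A, (∫ t in B, f x t) ∂(Measure.map X μ))

theorem exists_pos_measure_lt_ne_zero {Ω : Type*} [MeasurableSpace Ω] {μ : Measure Ω}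
    {S : Ω → ℝ} (h : μ {ω | 0 < S ω} ≠ 0) : ∃ q > 0, μ {ω | q < S ω} ≠ 0 := by
  have hcover : {ω | 0 < S ω} = ⋃ n : ℕ, {ω | 1 / ((n : ℝ) + 1) < S ω} := by
    ext ω
    simp only [Set.mem_ofPred_eq, Set.mem_iUnion]
    exact ⟨fun hω => exists_nat_one_div_lt hω, fun ⟨n, hn⟩ => lt_trans (by positivity) hn⟩
  rw [hcover] at h
  obtain ⟨n, hn⟩ := exists_measure_pos_of_not_measure_iUnion_null h
  exact ⟨_, by positivity, hn.ne'⟩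

theorem exists_measure_mem_Ioc_sub_add_pos {α Ω : Type*} [MeasurableSpace α]
    [MeasurableSpace Ω] {μ : Measure Ω} {X : Ω → α} {ε : Ω → ℝ} {A : Set α}
    (hXA : μ (X ⁻¹' A) ≠ 0) (a b : ℝ) :
    ∃ n : ℕ, 0 < μ {ω | X ω ∈ A ∧ ε ω ∈ Set.Ioc (a - n) (b + n)} := by
  have hcover : X ⁻¹' A = ⋃ n : ℕ, {ω | X ω ∈ A ∧ ε ω ∈ Set.Ioc (a - n) (b + n)} := by
    ext ω
    simp only [Set.mem_preimage, Set.mem_iUnion, Set.mem_ofPred_eq, Set.mem_Ioc]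
    refine ⟨fun hω => ?_, fun ⟨_, hω, _⟩ => hω⟩
    obtain ⟨n, hn⟩ := exists_nat_gt (max (a - ε ω) (ε ω - b))
    rw [max_lt_iff] at hn
    exact ⟨n, hω, by linarith, by linarith⟩
  exact exists_measure_pos_of_not_measure_iUnion_null (hcover ▸ hXA)

namespace HasCondDensity

variable {α Ω : Type*} [MeasurableSpace α] [MeasurableSpace Ω] {μ : Measure Ω}
  {X : Ω → α} {ε : Ω → ℝ} {f : α → ℝ → ℝ}

theorem neg (h : HasCondDensity μ X ε f) (hf : ∀ x t, f x (-t) = f x t) :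
    HasCondDensity μ X (-ε) f := by
  intro A B hA hB
  have hint (x : α) : ∫ t in -B, f x t = ∫ t in B, f x t := by
    have hpres := (Measure.measurePreserving_neg (volume : Measure ℝ)).setIntegral_preimage_emb
      (MeasurableEquiv.neg ℝ).measurableEmbedding (f x) B
    simp only [hf] at hpres
    exact hpres
  simp_rw [← hint]
  exact h A (-B) hA hB.neg

theorem measure_Iic_eq_measure_Ioi (h : HasCondDensity μ X ε f) (hf : ∀ x t, f x (-t) = f x t)
    {A : Set α} (hA : MeasurableSet A) :
    μ {ω | X ω ∈ A ∧ ε ω ∈ Set.Iic 0} = μ {ω | X ω ∈ A ∧ ε ω ∈ Set.Ioi 0} := by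
  have hint (x : α) : ∫ t in Set.Iic 0, f x t = ∫ t in Set.Ioi 0, f x t := by
    simpa only [hf, neg_zero] using integral_comp_neg_Iic (0 : ℝ) (f x)
  rw [h A _ hA measurableSet_Iic, h A _ hA measurableSet_Ioi]
  simp_rw [hint]

theorem measure_Iic_eq_half (h : HasCondDensity μ X ε f) (hX : Measurable X) (hε : Measurable ε)
    (hf : ∀ x t, f x (-t) = f x t) {A : Set α} (hA : MeasurableSet A) :
    μ {ω | X ω ∈ A ∧ ε ω ∈ Set.Iic 0} = μ (X ⁻¹' A) / 2 := by
  have hsplit : X ⁻¹' A =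
      {ω | X ω ∈ A ∧ ε ω ∈ Set.Iic 0} ∪ {ω | X ω ∈ A ∧ ε ω ∈ Set.Ioi 0} := by
    ext ω
    simp only [Set.mem_preimage, Set.mem_union, Set.mem_ofPred_eq, Set.mem_Iic, Set.mem_Ioi]
    constructor
    · intro hω; exact (le_or_gt (ε ω) 0).imp (⟨hω, ·⟩) (⟨hω, ·⟩)
    · rintro (⟨hω, -⟩ | ⟨hω, -⟩) <;> exact hω
  have hdisj : Disjoint {ω | X ω ∈ A ∧ ε ω ∈ Set.Iic 0} {ω | X ω ∈ A ∧ ε ω ∈ Set.Ioi 0} :=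
    Set.disjoint_left.2 fun ω h₁ h₂ => (Set.mem_Ioi.1 h₂.2).not_ge (Set.mem_Iic.1 h₁.2)
  rw [hsplit, measure_union hdisj ((hX hA).inter (hε measurableSet_Ioi)),
    ← h.measure_Iic_eq_measure_Ioi hf hA, ENNReal.eq_div_iff two_ne_zero ENNReal.ofNat_ne_top,
    two_mul]

theorem measure_Ioi_eq_half (h : HasCondDensity μ X ε f) (hX : Measurable X) (hε : Measurable ε)
    (hf : ∀ x t, f x (-t) = f x t) {A : Set α} (hA : MeasurableSet A) :
    μ {ω | X ω ∈ A ∧ ε ω ∈ Set.Ioi 0} = μ (X ⁻¹' A) / 2 :=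
  (h.measure_Iic_eq_measure_Ioi hf hA).symm.trans (h.measure_Iic_eq_half hX hε hf hA)

theorem integrableOn_of_measure_ne_zero (h : HasCondDensity μ X ε f) {A : Set α} {B : Set ℝ}
    (hA : MeasurableSet A) (hB : MeasurableSet B) (hne : μ {ω | X ω ∈ A ∧ ε ω ∈ B} ≠ 0) :
    IntegrableOn (fun x => ∫ t in B, f x t) A (μ.map X) := by
  refine Integrable.of_integral_ne_zero fun h0 => hne ?_
  rw [h A B hA hB, h0, ENNReal.ofReal_zero]

theorem measure_Ioc_ne_zero (h : HasCondDensity μ X ε f) (hX : Measurable X)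
    (hfpos : ∀ x t, 0 < f x t) (hfcont : ∀ x, Continuous (f x)) {A : Set α}
    (hA : MeasurableSet A) (hXA : μ (X ⁻¹' A) ≠ 0) {a b : ℝ} (hab : a < b) :
    μ {ω | X ω ∈ A ∧ ε ω ∈ Set.Ioc a b} ≠ 0 := by
  intro hI
  set I := Set.Ioc a b
  -- `f` need not be measurable in `x`, so integrability in `x` of the integral over `I` is only
  -- available as a difference of those over `J ⊇ I` and `J \ I`, forced by positive mass.
  obtain ⟨n, hJ⟩ := exists_measure_mem_Ioc_sub_add_pos hXA a b
  set J := Set.Ioc (a - n) (b + n)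
  set D := J \ I
  have hIJ : I ⊆ J := Set.Ioc_subset_Ioc (by linarith [n.cast_nonneg (α := ℝ)])
    (by linarith [n.cast_nonneg (α := ℝ)])
  have hD : MeasurableSet D := measurableSet_Ioc.diff measurableSet_Ioc
  have hJD : μ {ω | X ω ∈ A ∧ ε ω ∈ J} = μ {ω | X ω ∈ A ∧ ε ω ∈ D} := by
    have hsplit : {ω | X ω ∈ A ∧ ε ω ∈ J} ⊆
        {ω | X ω ∈ A ∧ ε ω ∈ I} ∪ {ω | X ω ∈ A ∧ ε ω ∈ D} := by
      rintro ω ⟨hω, hεJ⟩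
      by_cases hεI : ε ω ∈ I
      exacts [Or.inl ⟨hω, hεI⟩, Or.inr ⟨hω, hεJ, hεI⟩]
    refine le_antisymm ?_ (measure_mono fun ω hω => ⟨hω.1, hω.2.1⟩)
    exact (measure_mono hsplit).trans ((measure_union_le _ _).trans_eq (by rw [hI, zero_add]))
  have hintJ := h.integrableOn_of_measure_ne_zero hA measurableSet_Ioc hJ.ne'
  have hintD := h.integrableOn_of_measure_ne_zero hA hD (hJD ▸ hJ.ne')
  have hIpos (x : α) : 0 < ∫ t in I, f x t := by
    rw [← intervalIntegral.integral_of_le hab.le]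
    exact intervalIntegral.intervalIntegral_pos_of_pos ((hfcont x).intervalIntegrable a b)
      (hfpos x) hab
  have hsub (x : α) : (∫ t in J, f x t) - ∫ t in D, f x t = ∫ t in I, f x t := by
    have hfJ : IntegrableOn (f x) J := (hfcont x).integrableOn_Ioc
    rw [sub_eq_iff_eq_add, ← setIntegral_union Set.disjoint_sdiff_right hD (hfJ.mono_set hIJ)
      (hfJ.mono_set Set.sdiff_subset), Set.union_sdiff_cancel hIJ]
  have hnonneg {B : Set ℝ} (hB : MeasurableSet B) : 0 ≤ ∫ x in A, (∫ t in B, f x t) ∂μ.map X :=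
    integral_nonneg fun x => setIntegral_nonneg hB fun t _ => (hfpos x t).le
  have hintI : IntegrableOn (fun x => ∫ t in I, f x t) A (μ.map X) :=
    (hintJ.sub hintD).congr_fun (fun x _ => hsub x) hA
  have hpos : 0 < ∫ x in A, (∫ t in I, f x t) ∂μ.map X := by
    refine (setIntegral_pos_iff_support_of_nonneg_ae (ae_of_all _ fun x => (hIpos x).le)
      hintI).2 ?_
    rw [Set.inter_eq_right.2 fun x _ => Function.mem_support.2 (hIpos x).ne',
      Measure.map_apply hX hA]
    exact pos_iff_ne_zero.2 hXA
  have hzero : ∫ x in A, (∫ t in I, f x t) ∂μ.map X = 0 := by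
    simp_rw [← hsub]
    rw [integral_sub hintJ hintD, sub_eq_zero, ← ENNReal.ofReal_eq_ofReal_iff
      (hnonneg measurableSet_Ioc) (hnonneg hD), ← h A J hA measurableSet_Ioc, ← h A D hA hD, hJD]
  exact hpos.ne' hzero

theorem measure_mul_nonpos_lt_half_of_pos [IsProbabilityMeasure μ] (h : HasCondDensity μ X ε f)
    (hX : Measurable X) (hε : Measurable ε) (hfpos : ∀ x t, 0 < f x t)
    (hfsymm : ∀ x t, f x (-t) = f x t) (hfcont : ∀ x, Continuous (f x)) {σ : α → ℝ}
    (hσ : Measurable σ) (hσ0 : μ {ω | σ (X ω) = 0} = 0) {c : ℝ} (hc : 0 < c)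
    (hσpos : μ {ω | 0 < σ (X ω)} ≠ 0) :
    μ {ω | (c * σ (X ω) + ε ω) * σ (X ω) ≤ 0} < 1 / 2 := by
  obtain ⟨q, hq, hXq⟩ := exists_pos_measure_lt_ne_zero hσpos
  set E := {ω | (c * σ (X ω) + ε ω) * σ (X ω) ≤ 0}
  set P := σ ⁻¹' Set.Ioi 0
  set N := σ ⁻¹' Set.Iio 0
  set T := {ω | X ω ∈ σ ⁻¹' Set.Ioi q ∧ ε ω ∈ Set.Ioc (-(c * q)) 0}
  have hT : μ T ≠ 0 := h.measure_Ioc_ne_zero hX hfpos hfcont (hσ measurableSet_Ioi) hXq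
    (neg_lt_zero.2 (mul_pos hc hq))
  have hdisj : Disjoint (E \ {ω | σ (X ω) = 0}) T := by
    refine Set.disjoint_left.2 fun ω ⟨hE, _⟩ ⟨(hσq : q < σ (X ω)), hεT⟩ => ?_
    have : c * q < c * σ (X ω) := mul_lt_mul_of_pos_left hσq hc
    exact (mul_pos (by linarith [hεT.1]) (hq.trans hσq)).not_ge hE
  have hsub : (E \ {ω | σ (X ω) = 0}) ∪ T ⊆
      {ω | X ω ∈ P ∧ ε ω ∈ Set.Iic 0} ∪ {ω | X ω ∈ N ∧ ε ω ∈ Set.Ioi 0} := by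
    rintro ω (⟨hE, hσ0⟩ | ⟨hσq, hεT⟩)
    · rcases lt_or_gt_of_ne hσ0 with hneg | hpos
      · refine Or.inr ⟨hneg, ?_⟩
        have := nonneg_of_mul_nonpos_left hE hneg
        exact (by linarith [mul_neg_of_pos_of_neg hc hneg] : 0 < ε ω)
      · refine Or.inl ⟨hpos, ?_⟩
        have := nonpos_of_mul_nonpos_left hE hpos
        exact (by linarith [mul_pos hc hpos] : ε ω ≤ 0)
    · exact Or.inl ⟨hq.trans hσq, hεT.2⟩
  calc μ E = μ (E \ {ω | σ (X ω) = 0}) := (measure_sdiff_null hσ0).symm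
    _ < μ (E \ {ω | σ (X ω) = 0}) + μ T := ENNReal.lt_add_right (measure_ne_top _ _) hT
    _ = μ ((E \ {ω | σ (X ω) = 0}) ∪ T) :=
      (measure_union hdisj ((hX (hσ measurableSet_Ioi)).inter (hε measurableSet_Ioc))).symm
    _ ≤ μ {ω | X ω ∈ P ∧ ε ω ∈ Set.Iic 0} + μ {ω | X ω ∈ N ∧ ε ω ∈ Set.Ioi 0} :=
      (measure_mono hsub).trans (measure_union_le _ _)
    _ = μ (X ⁻¹' P ∪ X ⁻¹' N) / 2 := by
      rw [h.measure_Iic_eq_half hX hε hfsymm (hσ measurableSet_Ioi),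
        h.measure_Ioi_eq_half hX hε hfsymm (hσ measurableSet_Iio), ENNReal.div_add_div_same,
        measure_union ((Set.Ioi_disjoint_Iio_same.preimage σ).preimage X)
          (hX (hσ measurableSet_Iio))]
    _ ≤ 1 / 2 := ENNReal.div_le_div_right prob_le_one 2

theorem measure_mul_nonpos_lt_half [IsProbabilityMeasure μ] (h : HasCondDensity μ X ε f)
    (hX : Measurable X) (hε : Measurable ε) (hfpos : ∀ x t, 0 < f x t)
    (hfsymm : ∀ x t, f x (-t) = f x t) (hfcont : ∀ x, Continuous (f x)) {σ : α → ℝ}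
    (hσ : Measurable σ) (hσ0 : μ {ω | σ (X ω) = 0} = 0) {c : ℝ} (hc : 0 < c) :
    μ {ω | (c * σ (X ω) + ε ω) * σ (X ω) ≤ 0} < 1 / 2 := by
  by_cases hσpos : μ {ω | 0 < σ (X ω)} = 0
  · have hσneg : μ {ω | 0 < -σ (X ω)} ≠ 0 := by
      intro hσneg
      have hcover : Set.univ ⊆
          {ω | σ (X ω) = 0} ∪ {ω | 0 < σ (X ω)} ∪ {ω | 0 < -σ (X ω)} := fun ω _ => by
        rcases lt_trichotomy (σ (X ω)) 0 with hlt | heq | hgt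
        exacts [Or.inr (neg_pos.2 hlt), Or.inl (Or.inl heq), Or.inl (Or.inr hgt)]
      simpa using measure_mono_null hcover
        (measure_union_null (measure_union_null hσ0 hσpos) hσneg)
    convert (h.neg hfsymm).measure_mul_nonpos_lt_half_of_pos hX hε.neg hfpos hfsymm hfcont
      hσ.neg (by simpa only [Pi.neg_apply, neg_eq_zero] using hσ0) hc hσneg using 4 with ω
    simp only [Pi.neg_apply]
    ring_nf
  · exact h.measure_mul_nonpos_lt_half_of_pos hX hε hfpos hfsymm hfcont hσ hσ0 hc hσpos

end HasCondDensity

theorem sqrt_sum_sq_eq_norm {ι : Type*} [Fintype ι] (w : ι → ℝ) :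
    √(∑ i, w i ^ 2) = ‖(WithLp.toLp 2 w : EuclideanSpace ℝ ι)‖ := by
  simp [EuclideanSpace.norm_eq]

theorem sqrt_sum_sq_pos {ι : Type*} [Fintype ι] {w : ι → ℝ} (hw : w ≠ 0) :
    0 < √(∑ i, w i ^ 2) := by
  rw [sqrt_sum_sq_eq_norm, norm_pos_iff]
  exact (WithLp.toLp_eq_zero 2).not.2 hw

theorem sqrt_sum_sq_inv_smul_self {ι : Type*} [Fintype ι] {w : ι → ℝ} (hw : w ≠ 0) :
    √(∑ i, ((√(∑ j, w j ^ 2))⁻¹ • w) i ^ 2) = 1 := by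
  rw [sqrt_sum_sq_eq_norm, sqrt_sum_sq_eq_norm, WithLp.toLp_smul]
  exact norm_smul_inv_norm ((WithLp.toLp_eq_zero 2).not.2 hw)

theorem dotProduct_smul_residual {ι R : Type*} [Fintype ι] [CommRing R] {θ₀ θ v w : ι → R}
    {c e : R} (hv : θ₀ - θ = c • v) :
    v ⬝ᵥ ((w ⬝ᵥ θ₀ + e - w ⬝ᵥ θ) • w) = (c * (v ⬝ᵥ w) + e) * (v ⬝ᵥ w) := by
  rw [dotProduct_smul, smul_eq_mul, add_sub_right_comm, ← dotProduct_sub, hv, dotProduct_smul,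
    smul_eq_mul, dotProduct_comm, mul_comm]

theorem stmt7 {d : ℕ} {Ω : Type*} [MeasurableSpace Ω] (μ : Measure Ω) [IsProbabilityMeasure μ]
    (X : Ω → Fin d → ℝ) (ε : Ω → ℝ) (Y : Ω → ℝ) (θ₀ : Fin (d + 1) → ℝ)
    (hX : Measurable X) (hε : Measurable ε)
    (W : Ω → Fin (d + 1) → ℝ) (hW : ∀ ω, W ω = Fin.cons 1 (X ω))
    (hY : ∀ ω, Y ω = W ω ⬝ᵥ θ₀ + ε ω)
    -- ε has, conditionally on X, a continuous strictly positive density `f x ·`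
    -- that is symmetric about 0:
    (f : (Fin d → ℝ) → ℝ → ℝ)
    (hfpos : ∀ x t, 0 < f x t)
    (hfsymm : ∀ x t, f x (-t) = f x t)
    (hfcont : ∀ x, Continuous (f x))
    (hjoint : ∀ A : Set (Fin d → ℝ), ∀ B : Set ℝ, MeasurableSet A → MeasurableSet B →
      μ {ω | X ω ∈ A ∧ ε ω ∈ B} =
        ENNReal.ofReal (∫ x in A, (∫ t in B, f x t) ∂(Measure.map X μ)))
    -- X is continuous, so that `vᵀW = 0` has probability zero:
    (hXcont : ∀ v : Fin (d + 1) → ℝ, Real.sqrt (∑ i, v i ^ 2) = 1 →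
      μ {ω | v ⬝ᵥ W ω = 0} = 0) :
    (∀ θ : Fin (d + 1) → ℝ, θ ≠ θ₀ →
      μ {ω | ((Real.sqrt (∑ i, (θ₀ i - θ i) ^ 2))⁻¹ • (θ₀ - θ)) ⬝ᵥ
          ((Y ω - W ω ⬝ᵥ θ) • W ω) ≤ 0} < 1 / 2) ∧
    ∀ θ : Fin (d + 1) → ℝ,
      (∀ u : Fin (d + 1) → ℝ, Real.sqrt (∑ i, u i ^ 2) = 1 →
        1 / 2 ≤ μ {ω | u ⬝ᵥ ((Y ω - W ω ⬝ᵥ θ) • W ω) ≤ 0}) → θ = θ₀ := by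
  have hunit (θ : Fin (d + 1) → ℝ) (hθ : θ ≠ θ₀) :
      √(∑ i, (((√(∑ j, (θ₀ j - θ j) ^ 2))⁻¹ • (θ₀ - θ)) i) ^ 2) = 1 :=
    sqrt_sum_sq_inv_smul_self (sub_ne_zero.2 hθ.symm)
  have hlt (θ : Fin (d + 1) → ℝ) (hθ : θ ≠ θ₀) :
      μ {ω | ((√(∑ i, (θ₀ i - θ i) ^ 2))⁻¹ • (θ₀ - θ)) ⬝ᵥ
          ((Y ω - W ω ⬝ᵥ θ) • W ω) ≤ 0} < 1 / 2 := by
    set c := √(∑ i, (θ₀ i - θ i) ^ 2)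
    set v := c⁻¹ • (θ₀ - θ)
    have hc : 0 < c := sqrt_sum_sq_pos (sub_ne_zero.2 hθ.symm)
    have hv : θ₀ - θ = c • v := (smul_inv_smul₀ hc.ne' _).symm
    have hσ : Measurable fun x : Fin d → ℝ => v ⬝ᵥ Fin.cons 1 x := by fun_prop
    have hσ0 : μ {ω | v ⬝ᵥ Fin.cons 1 (X ω) = 0} = 0 := by
      simpa only [hW] using hXcont v (hunit θ hθ)
    simp_rw [hY, dotProduct_smul_residual hv, hW]
    exact HasCondDensity.measure_mul_nonpos_lt_half hjoint hX hε hfpos hfsymm hfcont hσ hσ0 hc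
  refine ⟨hlt, fun θ hhalf => ?_⟩
  by_contra hθ
  exact (hhalf _ (hunit θ hθ)).not_gt (hlt θ hθ)
end

section
/- The empirical halfspace regression depth equals the Tukey halfspace depth of the origin with respect to the transformed sample: inf over (v₀ ∈ ℝ, v₁ ∈ S^(d-1)) of (1/n)·min{#{i : rᵢ(θ)(v₁ᵀXᵢ - v₀) ≥ 0}, #{i : rᵢ(θ)(v₁ᵀXᵢ - v₀) ≤ 0}} equals inf over u ∈ S^d of (1/n)·#{i : rᵢ(θ)(uᵀWᵢ) ≤ 0}, where rᵢ(θ) = Yᵢ - Wᵢᵀθ and Wᵢ = (1, Xᵢᵀ)ᵀ. -/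
open Matrix

private lemma aux_pos_le {c a b : ℝ} (hc : 0 < c) : a * (c * b) ≤ 0 ↔ a * b ≤ 0 := by
  constructor <;> intro h <;> nlinarith

private lemma aux_neg_le {c a b : ℝ} (hc : 0 < c) : a * -(c * b) ≤ 0 ↔ 0 ≤ a * b := by
  constructor <;> intro h <;> nlinarith

private lemma aux_pos_ge {c a b : ℝ} (hc : 0 < c) : 0 ≤ a * (c * b) ↔ 0 ≤ a * b := by
  constructor <;> intro h <;> nlinarith

private lemma aux_tneg_ge {a t : ℝ} (ht : t < 0) : 0 ≤ a * t ↔ a ≤ 0 := by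
  constructor <;> intro h <;> nlinarith

private lemma aux_tneg_le {a t : ℝ} (ht : t < 0) : a * t ≤ 0 ↔ 0 ≤ a := by
  constructor <;> intro h <;> nlinarith

theorem stmt8 {d n : ℕ} (hd : 1 ≤ d) (hn : 1 ≤ n)
    (X : Fin n → Fin d → ℝ) (Y : Fin n → ℝ) (θ : Fin (d + 1) → ℝ)
    (W : Fin n → Fin (d + 1) → ℝ) (hW : ∀ i, W i = Fin.cons 1 (X i))
    (r : Fin n → ℝ) (hr : ∀ i, r i = Y i - W i ⬝ᵥ θ) :
    (⨅ p : ℝ × {v : Fin d → ℝ // Real.sqrt (∑ j, v j ^ 2) = 1},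
        (1 / n : ℝ) *
          ((min {i : Fin n | 0 ≤ r i * (p.2.1 ⬝ᵥ X i - p.1)}.ncard
              {i : Fin n | r i * (p.2.1 ⬝ᵥ X i - p.1) ≤ 0}.ncard : ℕ) : ℝ)) =
      ⨅ u : {u : Fin (d + 1) → ℝ // Real.sqrt (∑ j, u j ^ 2) = 1},
        (1 / n : ℝ) * (({i : Fin n | r i * (u.1 ⬝ᵥ W i) ≤ 0}.ncard : ℕ) : ℝ) := by
  haveI : NeZero n := ⟨Nat.one_le_iff_ne_zero.mp hn⟩
  have hunit : ∀ (m : ℕ) (k : Fin m), Real.sqrt (∑ j, (Pi.single k 1 : Fin m → ℝ) j ^ 2) = 1 := by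
    intro m k
    have : ∑ j, (Pi.single k 1 : Fin m → ℝ) j ^ 2 = 1 := by
      simp [Pi.single_apply, apply_ite (· ^ (2:ℕ))]
    rw [this, Real.sqrt_one]
  haveI : Nonempty {u : Fin (d + 1) → ℝ // Real.sqrt (∑ j, u j ^ 2) = 1} :=
    ⟨⟨Pi.single 0 1, hunit _ 0⟩⟩
  haveI : Nonempty (ℝ × {v : Fin d → ℝ // Real.sqrt (∑ j, v j ^ 2) = 1}) :=
    ⟨(0, ⟨Pi.single ⟨0, hd⟩ 1, hunit _ _⟩)⟩
  have hninv : (0:ℝ) ≤ 1 / n := by positivity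
  have hbL : BddBelow (Set.range fun p : ℝ × {v : Fin d → ℝ // Real.sqrt (∑ j, v j ^ 2) = 1} =>
      (1 / n : ℝ) *
        ((min {i : Fin n | 0 ≤ r i * (p.2.1 ⬝ᵥ X i - p.1)}.ncard
            {i : Fin n | r i * (p.2.1 ⬝ᵥ X i - p.1) ≤ 0}.ncard : ℕ) : ℝ)) := by
    refine ⟨0, ?_⟩; rintro y ⟨p, rfl⟩; positivity
  have hbR : BddBelow (Set.range fun u : {u : Fin (d + 1) → ℝ // Real.sqrt (∑ j, u j ^ 2) = 1} =>
      (1 / n : ℝ) * (({i : Fin n | r i * (u.1 ⬝ᵥ W i) ≤ 0}.ncard : ℕ) : ℝ)) := by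
    refine ⟨0, ?_⟩; rintro y ⟨u, rfl⟩; positivity
  refine le_antisymm (le_ciInf ?_) (le_ciInf ?_)
  · -- LHS inf ≤ each RHS value
    rintro ⟨u, hu⟩
    have hdot : ∀ i, u ⬝ᵥ W i = u 0 + (fun j : Fin d => u j.succ) ⬝ᵥ X i := by
      intro i
      simp [hW i, dotProduct, Fin.sum_univ_succ]
    have hs : (0:ℝ) ≤ ∑ j : Fin d, u j.succ ^ 2 := Finset.sum_nonneg fun _ _ => sq_nonneg _
    rcases eq_or_lt_of_le hs with h0 | hpos
    · -- tail of u is zero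
      have htz : ∀ j : Fin d, u j.succ = 0 := by
        intro j
        have h := (Finset.sum_eq_zero_iff_of_nonneg
          (fun j _ => sq_nonneg (u (Fin.succ j)))).mp h0.symm j (Finset.mem_univ j)
        exact pow_eq_zero_iff two_ne_zero |>.mp h
      have hdot' : ∀ i, u ⬝ᵥ W i = u 0 := by
        intro i; rw [hdot i]; simp [dotProduct, htz]
      have hsum : ∑ j, u j ^ 2 = u 0 ^ 2 := by
        rw [Fin.sum_univ_succ]
        simp [htz]
      have hu0 : u 0 = 1 ∨ u 0 = -1 := by
        rw [hsum, Real.sqrt_sq_eq_abs] at hu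
        exact (abs_eq (by norm_num)).mp hu
      -- choose unit vector v and large v₀
      set v : Fin d → ℝ := Pi.single (⟨0, hd⟩ : Fin d) 1 with hvdef
      have hvunit : Real.sqrt (∑ j, v j ^ 2) = 1 := by
        have : ∑ j, v j ^ 2 = 1 := by
          simp [hvdef, Pi.single_apply, apply_ite (· ^ (2:ℕ))]
        rw [this, Real.sqrt_one]
      set v₀ : ℝ := (Finset.univ.sup' Finset.univ_nonempty fun i => v ⬝ᵥ X i) + 1 with hv0def
      have hneg : ∀ i, v ⬝ᵥ X i - v₀ < 0 := by
        intro i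
        have h1 : v ⬝ᵥ X i ≤ Finset.univ.sup' Finset.univ_nonempty fun i => v ⬝ᵥ X i :=
          Finset.le_sup' (fun i => v ⬝ᵥ X i) (Finset.mem_univ i)
        simp only [hv0def]; linarith
      refine ciInf_le_of_le hbL ⟨v₀, ⟨v, hvunit⟩⟩ ?_
      rcases hu0 with h1 | h1
      · have hset : {i : Fin n | 0 ≤ r i * (v ⬝ᵥ X i - v₀)} = {i : Fin n | r i * (u ⬝ᵥ W i) ≤ 0} := by
          ext i
          simp only [Set.mem_setOf_eq, hdot' i, h1, mul_one]
          exact aux_tneg_ge (hneg i)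
        refine mul_le_mul_of_nonneg_left ?_ hninv
        rw [← hset]
        exact_mod_cast Nat.cast_le.mpr (min_le_left _ _)
      · have hset : {i : Fin n | r i * (v ⬝ᵥ X i - v₀) ≤ 0} = {i : Fin n | r i * (u ⬝ᵥ W i) ≤ 0} := by
          ext i
          simp only [Set.mem_setOf_eq, hdot' i, h1, mul_neg_one, neg_nonpos]
          exact aux_tneg_le (hneg i)
        refine mul_le_mul_of_nonneg_left ?_ hninv
        rw [← hset]
        exact_mod_cast Nat.cast_le.mpr (min_le_right _ _)
    · -- tail of u is nonzero
      set c : ℝ := Real.sqrt (∑ j : Fin d, u j.succ ^ 2) with hcdef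
      have hc : 0 < c := Real.sqrt_pos.mpr hpos
      have hc2 : c ^ 2 = ∑ j : Fin d, u j.succ ^ 2 := Real.sq_sqrt hs
      set v : Fin d → ℝ := fun j => c⁻¹ * u j.succ with hvdef
      have hvunit : Real.sqrt (∑ j, v j ^ 2) = 1 := by
        have h1 : ∑ j, v j ^ 2 = c⁻¹ ^ 2 * ∑ j : Fin d, u j.succ ^ 2 := by
          rw [Finset.mul_sum]
          simp [hvdef, mul_pow]
        rw [h1, ← hc2]
        have : c⁻¹ ^ 2 * c ^ 2 = 1 := by field_simp
        rw [this, Real.sqrt_one]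
      set v₀ : ℝ := -(u 0) * c⁻¹ with hv0def
      have hkey : ∀ i, v ⬝ᵥ X i - v₀ = c⁻¹ * (u ⬝ᵥ W i) := by
        intro i
        rw [hdot i]
        simp only [hvdef, hv0def, dotProduct]
        rw [show ∑ x : Fin d, c⁻¹ * u x.succ * X i x = c⁻¹ * ∑ x : Fin d, u x.succ * X i x from by
          rw [Finset.mul_sum]; exact Finset.sum_congr rfl fun j _ => by ring]
        ring
      refine ciInf_le_of_le hbL ⟨v₀, ⟨v, hvunit⟩⟩ ?_
      have hset : {i : Fin n | r i * (v ⬝ᵥ X i - v₀) ≤ 0} = {i : Fin n | r i * (u ⬝ᵥ W i) ≤ 0} := by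
        ext i
        simp only [Set.mem_setOf_eq, hkey i]
        exact aux_pos_le (inv_pos.mpr hc)
      refine mul_le_mul_of_nonneg_left ?_ hninv
      rw [← hset]
      exact_mod_cast Nat.cast_le.mpr (min_le_right _ _)
  · -- RHS inf ≤ each LHS value
    rintro ⟨v₀, v, hv⟩
    have hv1 : ∑ j, v j ^ 2 = 1 := Real.sqrt_eq_one.mp hv
    set c : ℝ := Real.sqrt (v₀ ^ 2 + 1) with hcdef
    have hc : 0 < c := Real.sqrt_pos.mpr (by positivity)
    have hc2 : c ^ 2 = v₀ ^ 2 + 1 := Real.sq_sqrt (by positivity)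
    set up : Fin (d + 1) → ℝ := fun j => c⁻¹ * (Fin.cons (-v₀) v : Fin (d+1) → ℝ) j with hupdef
    set um : Fin (d + 1) → ℝ := fun j => -(up j) with humdef
    have hsumup : ∑ j, up j ^ 2 = 1 := by
      have h1 : ∑ j, up j ^ 2 = c⁻¹ ^ 2 * ∑ j, (Fin.cons (-v₀) v : Fin (d+1) → ℝ) j ^ 2 := by
        rw [Finset.mul_sum]
        simp [hupdef, mul_pow]
      rw [h1, Fin.sum_univ_succ]
      simp only [Fin.cons_zero, Fin.cons_succ]
      rw [hv1]
      have : (-v₀) ^ 2 + 1 = c ^ 2 := by rw [hc2]; ring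
      rw [this]
      field_simp
    have hunitup : Real.sqrt (∑ j, up j ^ 2) = 1 := by rw [hsumup, Real.sqrt_one]
    have hunitum : Real.sqrt (∑ j, um j ^ 2) = 1 := by
      have : ∑ j, um j ^ 2 = ∑ j, up j ^ 2 := by simp [humdef]
      rw [this, hsumup, Real.sqrt_one]
    have hdotup : ∀ i, up ⬝ᵥ W i = c⁻¹ * (v ⬝ᵥ X i - v₀) := by
      intro i
      simp only [hupdef, hW i, dotProduct, Fin.sum_univ_succ, Fin.cons_zero, Fin.cons_succ]
      rw [show ∑ x : Fin d, c⁻¹ * v x * X i x = c⁻¹ * ∑ x : Fin d, v x * X i x from by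
        rw [Finset.mul_sum]; exact Finset.sum_congr rfl fun j _ => by ring]
      ring
    have hdotum : ∀ i, um ⬝ᵥ W i = -(c⁻¹ * (v ⬝ᵥ X i - v₀)) := by
      intro i
      have : um ⬝ᵥ W i = -(up ⬝ᵥ W i) := by
        simp [humdef, dotProduct, Finset.sum_neg_distrib]
      rw [this, hdotup i]
    rcases le_total ({i : Fin n | 0 ≤ r i * (v ⬝ᵥ X i - v₀)}.ncard)
        ({i : Fin n | r i * (v ⬝ᵥ X i - v₀) ≤ 0}.ncard) with hAB | hAB
    · -- min = A, use um
      refine ciInf_le_of_le hbR ⟨um, hunitum⟩ ?_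
      have hset : {i : Fin n | r i * (um ⬝ᵥ W i) ≤ 0} = {i : Fin n | 0 ≤ r i * (v ⬝ᵥ X i - v₀)} := by
        ext i
        simp only [Set.mem_setOf_eq, hdotum i]
        exact aux_neg_le (inv_pos.mpr hc)
      rw [hset]
      refine mul_le_mul_of_nonneg_left ?_ hninv
      exact_mod_cast Nat.cast_le.mpr (le_of_eq (min_eq_left hAB).symm)
    · -- min = B, use up
      refine ciInf_le_of_le hbR ⟨up, hunitup⟩ ?_
      have hset : {i : Fin n | r i * (up ⬝ᵥ W i) ≤ 0} = {i : Fin n | r i * (v ⬝ᵥ X i - v₀) ≤ 0} := by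
        ext i
        simp only [Set.mem_setOf_eq, hdotup i]
        exact aux_pos_le (inv_pos.mpr hc)
      rw [hset]
      refine mul_le_mul_of_nonneg_left ?_ hninv
      exact_mod_cast Nat.cast_le.mpr (le_of_eq (min_eq_right hAB).symm)
end

section
/- The sample zonoid regression depth ZRD(θ, P̄ₙ) = ZD(0, {rᵢ(θ)Wᵢ}ᵢ) attains value 1 exactly when 0 equals the average (1/n)Σᵢ rᵢ(θ)Wᵢ, i.e., Σᵢ Wᵢ(Yᵢ - Wᵢᵀθ) = 0; if Σᵢ WᵢWᵢᵀ is invertible, this maximizer is unique and equals the least squares estimator θ̂ = (Σᵢ WᵢWᵢᵀ)^(-1) Σᵢ WᵢYᵢ. -/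
open Matrix

/-- Sample zonoid depth of a point `p` with respect to points `z 1, …, z n`. -/
noncomputable def sampleZonoidDepth {n m : ℕ} (z : Fin n → Fin m → ℝ) (p : Fin m → ℝ) : ℝ :=
  sSup {α : ℝ | 0 < α ∧ α ≤ 1 ∧ ∃ lam : Fin n → ℝ,
    (∀ i, 0 ≤ lam i ∧ (n : ℝ) * lam i ≤ 1 / α) ∧ ∑ i, lam i = 1 ∧ p = ∑ i, lam i • z i}

lemma depth_one_iff {n m : ℕ} (hn : 0 < n) (z : Fin n → Fin m → ℝ) :
    sampleZonoidDepth z 0 = 1 ↔ ∑ i, z i = 0 := by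
  have hn' : (0:ℝ) < n := by exact_mod_cast hn
  have hn1 : (1:ℝ) ≤ n := by exact_mod_cast hn
  set S : Set ℝ := {α : ℝ | 0 < α ∧ α ≤ 1 ∧ ∃ lam : Fin n → ℝ,
    (∀ i, 0 ≤ lam i ∧ (n : ℝ) * lam i ≤ 1 / α) ∧ ∑ i, lam i = 1 ∧
      (0 : Fin m → ℝ) = ∑ i, lam i • z i} with hS
  have hzd : sampleZonoidDepth z 0 = sSup S := rfl
  have hbdd : BddAbove S := ⟨1, fun α hα => hα.2.1⟩
  rw [hzd]
  constructor
  · intro h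
    by_contra hne
    obtain ⟨j, hj⟩ : ∃ j, (∑ i, z i j) ≠ 0 := by
      by_contra hc
      push_neg at hc
      exact hne (by ext j; simpa [Finset.sum_apply] using hc j)
    set ε : ℝ := |∑ i, z i j| with hε
    have hεpos : 0 < ε := abs_pos.2 hj
    set c : ℝ := ∑ i, |z i j| with hc
    have hcnn : (0:ℝ) ≤ c := Finset.sum_nonneg fun i _ => abs_nonneg _
    set b : ℝ := n * c / (ε + n * c) with hb
    have hbpos : 0 < ε + n * c := by positivity
    have hblt : b < 1 := by
      rw [hb, div_lt_one hbpos]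
      linarith
    have hub : ∀ α ∈ S, α ≤ b := by
      rintro α ⟨hα0, hα1, lam, hlam, hsum, hrep⟩
      -- each n*lam k * α ≤ 1
      have hkey : ∀ k, (n:ℝ) * lam k * α ≤ 1 := by
        intro k
        have := (hlam k).2
        rw [le_div_iff₀ hα0] at this
        exact this
      -- bound |1 - n * lam i| ≤ n*(1-α)/α
      have hbound : ∀ i, |1 - (n:ℝ) * lam i| ≤ (n:ℝ) * (1 - α) / α := by
        intro i
        have hlow : ((n:ℝ) - n * lam i) * α ≤ n - 1 := by
          have hsplit : (n:ℝ) - n * lam i = ∑ k ∈ Finset.univ.erase i, n * lam k := by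
            have h1 : lam i + ∑ k ∈ Finset.univ.erase i, lam k = ∑ k, lam k :=
              Finset.add_sum_erase _ _ (Finset.mem_univ i)
            rw [← Finset.mul_sum]
            rw [hsum] at h1
            nlinarith [h1]
          rw [hsplit, Finset.sum_mul]
          calc ∑ k ∈ Finset.univ.erase i, (n:ℝ) * lam k * α
              ≤ ∑ k ∈ Finset.univ.erase i, (1:ℝ) := Finset.sum_le_sum fun k _ => hkey k
            _ = (n:ℝ) - 1 := by
                rw [Finset.sum_const, Finset.card_erase_of_mem (Finset.mem_univ i)]
                simp [Finset.card_univ]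
                push_cast [Nat.cast_sub hn]
                ring
        have hup : (n:ℝ) * lam i * α ≤ 1 := hkey i
        have hnn : 0 ≤ (n:ℝ) * lam i := mul_nonneg hn'.le (hlam i).1
        rw [le_div_iff₀ hα0]
        rcases abs_cases (1 - (n:ℝ) * lam i) with ⟨he, _⟩ | ⟨he, _⟩ <;> rw [he] <;> nlinarith
      -- main estimate
      have hrepj : ∑ i, lam i * z i j = 0 := by
        have := congrFun hrep j
        simpa [Finset.sum_apply] using this.symm
      have hmain : ε ≤ (n:ℝ) * (1 - α) / α * c := by
        have h1 : (∑ i, z i j) = ∑ i, (1 - (n:ℝ) * lam i) * z i j + (n:ℝ) * ∑ i, lam i * z i j := by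
          rw [Finset.mul_sum, ← Finset.sum_add_distrib]
          congr 1; ext i; ring
        rw [hε, h1, hrepj, mul_zero, add_zero]
        calc |∑ i, (1 - (n:ℝ) * lam i) * z i j|
            ≤ ∑ i, |(1 - (n:ℝ) * lam i) * z i j| := Finset.abs_sum_le_sum_abs _ _
          _ ≤ ∑ i, (n:ℝ) * (1 - α) / α * |z i j| := by
              apply Finset.sum_le_sum
              intro i _
              rw [abs_mul]
              exact mul_le_mul_of_nonneg_right (hbound i) (abs_nonneg _)
          _ = (n:ℝ) * (1 - α) / α * c := by rw [hc, Finset.mul_sum]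
      -- conclude α ≤ b
      have h2 : α * ε ≤ (n:ℝ) * (1 - α) * c := by
        have := mul_le_mul_of_nonneg_left hmain hα0.le
        calc α * ε ≤ α * ((n:ℝ) * (1 - α) / α * c) := this
          _ = (n:ℝ) * (1 - α) * c := by field_simp
      rw [hb, le_div_iff₀ hbpos]
      nlinarith
    have hSne : S.Nonempty := by
      by_contra hSe
      rw [Set.not_nonempty_iff_eq_empty] at hSe
      rw [hSe, Real.sSup_empty] at h
      norm_num at h
    have := csSup_le hSne hub
    linarith
  · intro h
    have h1 : (1:ℝ) ∈ S := by
      refine ⟨one_pos, le_refl 1, fun _ => 1 / n, fun i => ⟨by positivity, by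
        rw [mul_one_div, div_self hn'.ne']; norm_num⟩, by
        rw [Finset.sum_const]; simp [nsmul_eq_mul]; field_simp, ?_⟩
      have hh : ∑ i, (1 / (n:ℝ)) • z i = (1 / (n:ℝ)) • ∑ i, z i := by
        rw [Finset.smul_sum]
      rw [hh, h, smul_zero]
    exact le_antisymm (csSup_le ⟨1, h1⟩ fun α hα => hα.2.1) (le_csSup hbdd h1)

lemma sum_residual_eq {d n : ℕ} (W : Fin n → Fin (d+1) → ℝ) (Y : Fin n → ℝ)
    (θ : Fin (d+1) → ℝ) :
    ∑ i, (Y i - W i ⬝ᵥ θ) • W i =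
      (∑ i, Y i • W i) - (∑ i, Matrix.vecMulVec (W i) (W i)).mulVec θ := by
  ext k
  simp only [Finset.sum_apply, Pi.sub_apply, Pi.smul_apply, smul_eq_mul,
    Matrix.mulVec, dotProduct, Matrix.sum_apply, Matrix.vecMulVec_apply,
    Finset.sum_mul, sub_mul]
  rw [Finset.sum_sub_distrib]
  congr 1
  rw [Finset.sum_comm]
  apply Finset.sum_congr rfl
  intro x _
  apply Finset.sum_congr rfl
  intro i _
  ring


theorem stmt13 {d n : ℕ} (hn : 0 < n)
    (X : Fin n → Fin d → ℝ) (Y : Fin n → ℝ)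
    (W : Fin n → Fin (d + 1) → ℝ) (hW : ∀ i, W i = Fin.cons 1 (X i)) :
    (∀ θ : Fin (d + 1) → ℝ,
      sampleZonoidDepth (fun i => (Y i - W i ⬝ᵥ θ) • W i) 0 = 1 ↔
        ∑ i, (Y i - W i ⬝ᵥ θ) • W i = 0) ∧
    (IsUnit (∑ i, Matrix.vecMulVec (W i) (W i)).det →
      ∀ θ : Fin (d + 1) → ℝ,
        sampleZonoidDepth (fun i => (Y i - W i ⬝ᵥ θ) • W i) 0 = 1 ↔
          θ = (∑ i, Matrix.vecMulVec (W i) (W i))⁻¹.mulVec (∑ i, Y i • W i)) := by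
  have key : ∀ θ : Fin (d + 1) → ℝ,
      sampleZonoidDepth (fun i => (Y i - W i ⬝ᵥ θ) • W i) 0 = 1 ↔
        ∑ i, (Y i - W i ⬝ᵥ θ) • W i = 0 :=
    fun θ => depth_one_iff hn _
  refine ⟨key, fun hdet θ => ?_⟩
  rw [key θ, sum_residual_eq, sub_eq_zero]
  constructor
  · intro h
    rw [h, Matrix.mulVec_mulVec, Matrix.nonsing_inv_mul _ hdet, Matrix.one_mulVec]
  · intro h
    rw [h, Matrix.mulVec_mulVec, Matrix.mul_nonsing_inv _ hdet, Matrix.one_mulVec]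
end

section
/- For the population Rayleigh regression depth with Õ(θ) = sup_{u ∈ S^d} |E(uᵀ(Y - Wᵀθ)W)| / sqrt(Var(uᵀYW)): if E(ε|X) = 0 then E((Y - Wᵀθ)W) = E(WWᵀ)(θ₀ - θ), so Õ(θ₀) = 0 and PRD^r(θ₀) = 1 is the maximum; moreover if E(WWᵀ) is positive definite the maximizer θ₀ is unique. -/
/-!
Under `E(ε | X) = 0` the noise is orthogonal to every function of `X`, in particular to each
coordinate of `W = (1, X)`, so `E((Y - Wᵀθ) W) = E(W Wᵀ) (θ₀ - θ)`. The outlyingness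
`Õ(θ) = sup_u |uᵀ Σ̄ (θ₀ - θ)| / √(uᵀ Σ̃ u)` is therefore `0` at `θ₀`, and as `Σ̃` is positive
definite the supremum is over a bounded family, so `Õ(θ) = 0` forces `Σ̄ (θ₀ - θ) = 0`
(test `u` against the coordinate vectors), hence `θ = θ₀` as `Σ̄` is positive definite.
-/

open MeasureTheory Matrix

theorem integral_mul_eq_zero_of_condExp_eq_zero {Ω : Type*} {m m₀ : MeasurableSpace Ω}
    {μ : Measure Ω} [IsFiniteMeasure μ] {f g : Ω → ℝ} (hm : m ≤ m₀)
    (hg : StronglyMeasurable[m] g) (hfg : Integrable (fun ω => f ω * g ω) μ)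
    (hf : Integrable f μ) (hcond : μ[f | m] =ᵐ[μ] 0) :
    ∫ ω, f ω * g ω ∂μ = 0 := by
  have hpull : μ[f * g | m] =ᵐ[μ] 0 := by
    filter_upwards [condExp_mul_of_stronglyMeasurable_right hg hfg hf, hcond] with ω h h0
    simp [h, h0]
  calc ∫ ω, f ω * g ω ∂μ = ∫ ω, (μ[f * g | m]) ω ∂μ := (integral_condExp hm).symm
    _ = 0 := by simp [integral_congr_ae hpull]

theorem measurable_fin_cons_apply {d : ℕ} (a : ℝ) (i : Fin (d + 1)) :
    Measurable fun x : Fin d → ℝ => (Fin.cons a x : Fin (d + 1) → ℝ) i := by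
  refine Fin.cases ?_ (fun j => ?_) i
  · simp
  · simpa using measurable_pi_apply j

section SecondMoments

variable {Ω : Type*} [MeasurableSpace Ω] {μ : Measure Ω} {n : Type*} [Fintype n]
  {W : Ω → n → ℝ} {S : Matrix n n ℝ}

theorem integral_dotProduct_mul_eq_mulVec (hWW : ∀ i j, Integrable (fun ω => W ω i * W ω j) μ)
    (hS : ∀ i j, S i j = ∫ ω, W ω i * W ω j ∂μ) (v : n → ℝ) (i : n) :
    ∫ ω, (W ω ⬝ᵥ v) * W ω i ∂μ = (S *ᵥ v) i := by
  have hexpand : ∀ ω, (W ω ⬝ᵥ v) * W ω i = ∑ j, v j * (W ω i * W ω j) := fun ω => by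
    rw [dotProduct, Finset.sum_mul]
    exact Finset.sum_congr rfl fun j _ => by ring
  simp_rw [hexpand]
  rw [integral_finsetSum _ fun j _ => (hWW i j).const_mul (v j)]
  simp_rw [integral_const_mul, mulVec, dotProduct, hS, mul_comm]

theorem integral_residual_mul_eq_mulVec {ε Y : Ω → ℝ} {θ₀ : n → ℝ}
    (hY : ∀ ω, Y ω = W ω ⬝ᵥ θ₀ + ε ω) (hεW : ∀ i, Integrable (fun ω => ε ω * W ω i) μ)
    (hWW : ∀ i j, Integrable (fun ω => W ω i * W ω j) μ)
    (hS : ∀ i j, S i j = ∫ ω, W ω i * W ω j ∂μ) (horth : ∀ i, ∫ ω, ε ω * W ω i ∂μ = 0)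
    (θ : n → ℝ) :
    (fun i => ∫ ω, (Y ω - W ω ⬝ᵥ θ) * W ω i ∂μ) = S *ᵥ (θ₀ - θ) := by
  funext i
  have hsplit : ∀ ω, (Y ω - W ω ⬝ᵥ θ) * W ω i = (W ω ⬝ᵥ (θ₀ - θ)) * W ω i + ε ω * W ω i :=
    fun ω => by rw [hY, dotProduct_sub]; ring
  have hint : Integrable (fun ω => (W ω ⬝ᵥ (θ₀ - θ)) * W ω i) μ := by
    simp_rw [dotProduct, Finset.sum_mul]
    exact integrable_finsetSum _ fun j _ =>
      ((hWW i j).const_mul ((θ₀ - θ) j)).congr (ae_of_all _ fun ω => by ring)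
  simp_rw [hsplit]
  rw [integral_add hint (hεW i), horth, add_zero, integral_dotProduct_mul_eq_mulVec hWW hS]

end SecondMoments

theorem isCompact_setOf_sqrt_sum_sq_eq_one (n : Type*) [Fintype n] :
    IsCompact {u : n → ℝ | √(∑ i, u i ^ 2) = 1} := by
  have hsphere : {u : n → ℝ | √(∑ i, u i ^ 2) = 1} =
      WithLp.toLp 2 ⁻¹' Metric.sphere (0 : EuclideanSpace ℝ n) 1 := by
    ext u
    simp [EuclideanSpace.norm_eq]
  rw [hsphere]
  exact (PiLp.homeomorph 2 _).symm.isCompact_preimage.mpr (isCompact_sphere _ _)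

section RayleighDepth

variable {n : Type*} [Fintype n] {T : Matrix n n ℝ}

/-- `Õ(θ) = rayleighOutlyingness Σ̃ (Σ̄ (θ₀ - θ))` and `PRD^r(θ) = rayleighDepth Σ̃ (Σ̄ (θ₀ - θ))`. -/
noncomputable def rayleighOutlyingness (T : Matrix n n ℝ) (v : n → ℝ) : ℝ :=
  ⨆ u : {u : n → ℝ // √(∑ i, u i ^ 2) = 1}, |u.1 ⬝ᵥ v| / √(u.1 ⬝ᵥ T *ᵥ u.1)

noncomputable def rayleighDepth (T : Matrix n n ℝ) (v : n → ℝ) : ℝ :=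
  1 / (1 + rayleighOutlyingness T v)

theorem rayleighOutlyingness_zero : rayleighOutlyingness T 0 = 0 := by
  simp [rayleighOutlyingness]

theorem rayleighOutlyingness_nonneg (v : n → ℝ) : 0 ≤ rayleighOutlyingness T v :=
  Real.iSup_nonneg fun _ => by positivity

theorem bddAbove_rayleighQuotient (hT : T.PosDef) (v : n → ℝ) :
    BddAbove (Set.range fun u : {u : n → ℝ // √(∑ i, u i ^ 2) = 1} =>
      |u.1 ⬝ᵥ v| / √(u.1 ⬝ᵥ T *ᵥ u.1)) := by
  have hden : ∀ u ∈ {u : n → ℝ | √(∑ i, u i ^ 2) = 1}, √(u ⬝ᵥ T *ᵥ u) ≠ 0 := by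
    intro u hu
    have hu0 : u ≠ 0 := by rintro rfl; simp at hu
    exact (Real.sqrt_pos.mpr (hT.dotProduct_mulVec_pos hu0)).ne'
  have hcont : ContinuousOn (fun u : n → ℝ => |u ⬝ᵥ v| / √(u ⬝ᵥ T *ᵥ u))
      {u : n → ℝ | √(∑ i, u i ^ 2) = 1} := by
    refine ContinuousOn.div (by fun_prop) ?_ hden
    simp only [dotProduct, mulVec]
    fun_prop
  refine ((isCompact_setOf_sqrt_sum_sq_eq_one n).bddAbove_image hcont).mono ?_
  rintro _ ⟨u, rfl⟩
  exact ⟨u.1, u.2, rfl⟩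

theorem eq_zero_of_rayleighOutlyingness_eq_zero (hT : T.PosDef) {v : n → ℝ}
    (h : rayleighOutlyingness T v = 0) : v = 0 := by
  classical
  funext j
  have hunit : √(∑ i, (Pi.single j (1 : ℝ) : n → ℝ) i ^ 2) = 1 := by
    simp [Pi.single_apply]
  have hle := le_ciSup (bddAbove_rayleighQuotient hT v) ⟨Pi.single j 1, hunit⟩
  rw [← rayleighOutlyingness, h] at hle
  have hden : ¬√(T j j) ≤ 0 := not_le.mpr (Real.sqrt_pos.mpr (hT.diag_pos))
  simpa [single_dotProduct, div_nonpos_iff, hden] using hle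

theorem rayleighDepth_le_one (v : n → ℝ) : rayleighDepth T v ≤ 1 := by
  have hO := rayleighOutlyingness_nonneg (T := T) v
  rw [rayleighDepth, div_le_one (by linarith)]
  linarith

theorem rayleighDepth_eq_one_iff (hT : T.PosDef) {v : n → ℝ} : rayleighDepth T v = 1 ↔ v = 0 := by
  refine ⟨fun h => eq_zero_of_rayleighOutlyingness_eq_zero hT ?_, ?_⟩
  · have hO := rayleighOutlyingness_nonneg (T := T) v
    rw [rayleighDepth, div_eq_one_iff_eq (by linarith)] at h
    linarith
  · rintro rfl
    simp [rayleighDepth, rayleighOutlyingness_zero]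

end RayleighDepth

theorem stmt14_general {d : ℕ} {Ω : Type*} [MeasurableSpace Ω] (μ : Measure Ω) [IsProbabilityMeasure μ]
    (X : Ω → Fin d → ℝ) (ε : Ω → ℝ) (Y : Ω → ℝ) (θ₀ : Fin (d + 1) → ℝ)
    (hX : Measurable X)
    (W : Ω → Fin (d + 1) → ℝ) (hW : ∀ ω, W ω = Fin.cons 1 (X ω))
    (hY : ∀ ω, Y ω = W ω ⬝ᵥ θ₀ + ε ω)
    (hcond : μ[ε | MeasurableSpace.comap X inferInstance] =ᵐ[μ] 0)
    (hεW : ∀ i, Integrable (fun ω => ε ω * W ω i) μ)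
    (hWW : ∀ i j, Integrable (fun ω => W ω i * W ω j) μ)
    (Sbar : Matrix (Fin (d + 1)) (Fin (d + 1)) ℝ)
    (hSbar : ∀ i j, Sbar i j = ∫ ω, W ω i * W ω j ∂μ)
    (hSbarpd : Sbar.PosDef)
    (Stil : Matrix (Fin (d + 1)) (Fin (d + 1)) ℝ)
    (hStilpd : Stil.PosDef) :
    (∀ θ : Fin (d + 1) → ℝ,
      (fun i => ∫ ω, (Y ω - W ω ⬝ᵥ θ) * W ω i ∂μ) = Sbar.mulVec (θ₀ - θ)) ∧
    (⨆ u : {u : Fin (d + 1) → ℝ // Real.sqrt (∑ i, u i ^ 2) = 1},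
        |u.1 ⬝ᵥ Sbar.mulVec (θ₀ - θ₀)| / Real.sqrt (u.1 ⬝ᵥ Stil.mulVec u.1)) = 0 ∧
    (1 : ℝ) / (1 + ⨆ u : {u : Fin (d + 1) → ℝ // Real.sqrt (∑ i, u i ^ 2) = 1},
        |u.1 ⬝ᵥ Sbar.mulVec (θ₀ - θ₀)| / Real.sqrt (u.1 ⬝ᵥ Stil.mulVec u.1)) = 1 ∧
    (∀ θ : Fin (d + 1) → ℝ,
      (1 : ℝ) / (1 + ⨆ u : {u : Fin (d + 1) → ℝ // Real.sqrt (∑ i, u i ^ 2) = 1},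
        |u.1 ⬝ᵥ Sbar.mulVec (θ₀ - θ)| / Real.sqrt (u.1 ⬝ᵥ Stil.mulVec u.1)) ≤ 1) ∧
    ∀ θ : Fin (d + 1) → ℝ,
      (1 : ℝ) / (1 + ⨆ u : {u : Fin (d + 1) → ℝ // Real.sqrt (∑ i, u i ^ 2) = 1},
        |u.1 ⬝ᵥ Sbar.mulVec (θ₀ - θ)| / Real.sqrt (u.1 ⬝ᵥ Stil.mulVec u.1)) = 1 → θ = θ₀ := by
  have hWmeas : ∀ i, StronglyMeasurable[MeasurableSpace.comap X inferInstance] fun ω => W ω i :=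
    fun i => by
      simp_rw [hW]
      exact ((measurable_fin_cons_apply 1 i).comp (comap_measurable X)).stronglyMeasurable
  have hεint : Integrable ε μ := by simpa [hW] using hεW 0
  have horth : ∀ i, ∫ ω, ε ω * W ω i ∂μ = 0 := fun i =>
    integral_mul_eq_zero_of_condExp_eq_zero hX.comap_le (hWmeas i) (hεW i) hεint hcond
  have hdepth : ∀ θ, rayleighDepth Stil (Sbar *ᵥ (θ₀ - θ)) = 1 → θ = θ₀ := fun θ h => by
    have hzero := (rayleighDepth_eq_one_iff hStilpd).mp h
    rw [mulVec_sub, sub_eq_zero] at hzero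
    exact (mulVec_injective_of_isUnit hSbarpd.isUnit hzero).symm
  refine ⟨integral_residual_mul_eq_mulVec hY hεW hWW hSbar horth, ?_, ?_,
    fun θ => rayleighDepth_le_one _, hdepth⟩
  · rw [sub_self, mulVec_zero]
    exact rayleighOutlyingness_zero
  · exact (rayleighDepth_eq_one_iff hStilpd).mpr (by simp)

theorem stmt14 {d : ℕ} {Ω : Type*} [MeasurableSpace Ω] (μ : Measure Ω) [IsProbabilityMeasure μ]
    (X : Ω → Fin d → ℝ) (ε : Ω → ℝ) (Y : Ω → ℝ) (θ₀ : Fin (d + 1) → ℝ)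
    (hX : Measurable X) (hε : Measurable ε)
    (W : Ω → Fin (d + 1) → ℝ) (hW : ∀ ω, W ω = Fin.cons 1 (X ω))
    (hY : ∀ ω, Y ω = W ω ⬝ᵥ θ₀ + ε ω)
    (hcond : μ[ε | MeasurableSpace.comap X inferInstance] =ᵐ[μ] 0)
    (hεW : ∀ i, Integrable (fun ω => ε ω * W ω i) μ)
    (hWW : ∀ i j, Integrable (fun ω => W ω i * W ω j) μ)
    (Sbar : Matrix (Fin (d + 1)) (Fin (d + 1)) ℝ)
    (hSbar : ∀ i j, Sbar i j = ∫ ω, W ω i * W ω j ∂μ)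
    (hSbarpd : Sbar.PosDef)
    (Stil : Matrix (Fin (d + 1)) (Fin (d + 1)) ℝ)
    (hStil : ∀ i j, Stil i j = ∫ ω, (Y ω * W ω i - ∫ ω', Y ω' * W ω' i ∂μ) *
      (Y ω * W ω j - ∫ ω', Y ω' * W ω' j ∂μ) ∂μ)
    (hStilpd : Stil.PosDef) :
    (∀ θ : Fin (d + 1) → ℝ,
      (fun i => ∫ ω, (Y ω - W ω ⬝ᵥ θ) * W ω i ∂μ) = Sbar.mulVec (θ₀ - θ)) ∧
    (⨆ u : {u : Fin (d + 1) → ℝ // Real.sqrt (∑ i, u i ^ 2) = 1},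
        |u.1 ⬝ᵥ Sbar.mulVec (θ₀ - θ₀)| / Real.sqrt (u.1 ⬝ᵥ Stil.mulVec u.1)) = 0 ∧
    (1 : ℝ) / (1 + ⨆ u : {u : Fin (d + 1) → ℝ // Real.sqrt (∑ i, u i ^ 2) = 1},
        |u.1 ⬝ᵥ Sbar.mulVec (θ₀ - θ₀)| / Real.sqrt (u.1 ⬝ᵥ Stil.mulVec u.1)) = 1 ∧
    (∀ θ : Fin (d + 1) → ℝ,
      (1 : ℝ) / (1 + ⨆ u : {u : Fin (d + 1) → ℝ // Real.sqrt (∑ i, u i ^ 2) = 1},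
        |u.1 ⬝ᵥ Sbar.mulVec (θ₀ - θ)| / Real.sqrt (u.1 ⬝ᵥ Stil.mulVec u.1)) ≤ 1) ∧
    ∀ θ : Fin (d + 1) → ℝ,
      (1 : ℝ) / (1 + ⨆ u : {u : Fin (d + 1) → ℝ // Real.sqrt (∑ i, u i ^ 2) = 1},
        |u.1 ⬝ᵥ Sbar.mulVec (θ₀ - θ)| / Real.sqrt (u.1 ⬝ᵥ Stil.mulVec u.1)) = 1 → θ = θ₀ :=
  stmt14_general μ X ε Y θ₀ hX W hW hY hcond hεW hWW Sbar hSbar hSbarpd Stil hStilpd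
end

section
/- For the zonoid regression depth at the population level, ZRD(θ, P̄) = ZD(0, law of (Y - Wᵀθ)W): under E(ε|X) = 0 and E(WWᵀ) positive definite, the mean of (Y - Wᵀθ)W is E(WWᵀ)(θ₀ - θ), which is 0 if and only if θ = θ₀; since zonoid depth equals 1 exactly at the mean, ZRD(·, P̄) is uniquely maximized at θ₀ with value 1. -/
open MeasureTheory Matrix

/-- Population zonoid depth of a point `p` with respect to the law of the random vector `Z`. -/
noncomputable def popZonoidDepth {Ω : Type*} [MeasurableSpace Ω] (μ : MeasureTheory.Measure Ω)
    {m : ℕ} (Z : Ω → Fin m → ℝ) (p : Fin m → ℝ) : ℝ :=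
  sSup {α : ℝ | 0 < α ∧ α ≤ 1 ∧ ∃ g : (Fin m → ℝ) → ℝ, Measurable g ∧
    (∀ t, 0 ≤ g t ∧ g t ≤ 1 / α) ∧ (∫ ω, g (Z ω) ∂μ) = 1 ∧
    ∀ i, (∫ ω, g (Z ω) * Z ω i ∂μ) = p i}

/-!
The mean of the score `(Y - W ⬝ᵥ θ) • W` is `Σ̄ (θ₀ - θ)`: it is affine in `θ`, and at `θ₀` it is
`E[W ε] = E[W E(ε | X)] = 0`. Zonoid depth never exceeds 1, and the weight `g ≡ 1` shows that it
equals 1 at the mean. Conversely, a weight `g` admissible at level `α` has `0 ≤ g ≤ 1/α` and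
`∫ g = 1`, so `h = 1 - g` satisfies `|h| ≤ 1` and `∫ |h| ≤ 2 (1/α - 1)`. Cutting an integrable `f`
at height `M` gives `|∫ f - ∫ g f| ≤ 2 M (1/α - 1) + ∫ (|f| - M)⁺`, which is small for `M` large
and `α` close to 1; so depth 1 forces the point to be the mean, and positive definiteness of `Σ̄`
leaves `θ₀` as the only parameter whose score has mean zero.
-/

open Filter

namespace MeasureTheory

variable {Ω : Type*} [MeasurableSpace Ω] {μ : Measure Ω}

theorem Integrable.exists_integral_max_abs_sub_le [IsFiniteMeasure μ] {f : Ω → ℝ}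
    (hf : Integrable f μ) {c : ℝ} (hc : 0 < c) :
    ∃ M : ℝ, 0 ≤ M ∧ ∫ ω, max (|f ω| - M) 0 ∂μ ≤ c := by
  have hlim : Tendsto (fun n : ℕ => ∫ ω, max (|f ω| - n) 0 ∂μ) atTop (nhds (∫ _, (0 : ℝ) ∂μ)) := by
    refine tendsto_integral_of_dominated_convergence (fun ω => |f ω|)
      (fun n => (hf.abs.sub (integrable_const _)).pos_part.aestronglyMeasurable) hf.abs
      (fun n => ae_of_all _ fun ω => ?_) (ae_of_all _ fun ω => ?_)
    · rw [Real.norm_eq_abs, abs_of_nonneg (le_max_right _ _)]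
      exact max_le (by simp) (abs_nonneg _)
    · refine tendsto_atTop_of_eventually_const (i₀ := ⌈|f ω|⌉₊) fun n hn => ?_
      have : |f ω| ≤ n := (Nat.le_ceil _).trans (by exact_mod_cast hn)
      simp [this]
  rw [integral_zero] at hlim
  obtain ⟨n, hn⟩ := (hlim.eventually_lt_const hc).exists
  exact ⟨n, n.cast_nonneg, hn.le⟩

theorem integral_abs_le_two_mul_of_integral_eq_zero [IsProbabilityMeasure μ] {h : Ω → ℝ} {δ : ℝ}
    (hh : Integrable h μ) (h_zero : ∫ ω, h ω ∂μ = 0) (hδ : 0 ≤ δ) (h_ge : ∀ ω, -δ ≤ h ω) :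
    ∫ ω, |h ω| ∂μ ≤ 2 * δ := by
  have hneg : Integrable (fun ω => max (-h ω) 0) μ := hh.neg.pos_part
  calc ∫ ω, |h ω| ∂μ = ∫ ω, (h ω + 2 * max (-h ω) 0) ∂μ := by
        congr 1; funext ω
        rcases le_total 0 (h ω) with h0 | h0
        · simp [abs_of_nonneg h0, h0]
        · rw [abs_of_nonpos h0, max_eq_left (by linarith)]; ring
    _ = 2 * ∫ ω, max (-h ω) 0 ∂μ := by
        rw [integral_add hh (hneg.const_mul 2), h_zero, integral_const_mul, zero_add]
    _ ≤ 2 * δ := by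
        gcongr
        calc ∫ ω, max (-h ω) 0 ∂μ ≤ ∫ _, δ ∂μ :=
              integral_mono hneg (integrable_const δ) fun ω => max_le (by linarith [h_ge ω]) hδ
          _ = δ := by simp

theorem abs_integral_mul_le_of_abs_le_one [IsFiniteMeasure μ] {h f : Ω → ℝ} {M : ℝ}
    (hh : AEStronglyMeasurable h μ) (h_le : ∀ ω, |h ω| ≤ 1) (hf : Integrable f μ) :
    |∫ ω, h ω * f ω ∂μ| ≤ M * ∫ ω, |h ω| ∂μ + ∫ ω, max (|f ω| - M) 0 ∂μ := by
  have hh_int : Integrable h μ :=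
    (integrable_const (1 : ℝ)).mono' hh (ae_of_all _ fun ω => h_le ω)
  have htail : Integrable (fun ω => max (|f ω| - M) 0) μ :=
    (hf.abs.sub (integrable_const M)).pos_part
  have hpt : ∀ ω, |h ω * f ω| ≤ M * |h ω| + max (|f ω| - M) 0 := fun ω => by
    rw [abs_mul]
    rcases le_total |f ω| M with hfM | hfM
    · nlinarith [abs_nonneg (h ω), le_max_right (|f ω| - M) 0]
    · nlinarith [abs_nonneg (h ω), h_le ω, le_max_left (|f ω| - M) 0]
  calc |∫ ω, h ω * f ω ∂μ| ≤ ∫ ω, |h ω * f ω| ∂μ := abs_integral_le_integral_abs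
    _ ≤ ∫ ω, (M * |h ω| + max (|f ω| - M) 0) ∂μ :=
        integral_mono (hf.bdd_mul hh (ae_of_all _ fun ω => h_le ω)).abs
          ((hh_int.abs.const_mul M).add htail) hpt
    _ = M * ∫ ω, |h ω| ∂μ + ∫ ω, max (|f ω| - M) 0 ∂μ := by
        rw [integral_add (hh_int.abs.const_mul M) htail, integral_const_mul]

theorem integral_mul_eq_zero_of_condExp_eq_zero {Ω : Type*} {m m₀ : MeasurableSpace Ω}
    {μ : Measure Ω} [IsFiniteMeasure μ] (hm : m ≤ m₀) {g ε : Ω → ℝ} (hg : StronglyMeasurable[m] g)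
    (hgε : Integrable (g * ε) μ) (hε : Integrable ε μ) (hcond : μ[ε | m] =ᵐ[μ] 0) :
    ∫ ω, g ω * ε ω ∂μ = 0 :=
  calc ∫ ω, g ω * ε ω ∂μ = ∫ ω, μ[g * ε | m] ω ∂μ := (integral_condExp hm).symm
    _ = ∫ ω, (g * μ[ε | m]) ω ∂μ :=
        integral_congr_ae (condExp_mul_of_stronglyMeasurable_left hg hgε hε)
    _ = 0 := by
        rw [integral_congr_ae (hcond.mono fun ω hω =>
          show (g * μ[ε | m]) ω = (0 : Ω → ℝ) ω by simp [hω])]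
        simp

end MeasureTheory

section ZonoidDepth

variable {Ω : Type*} [MeasurableSpace Ω] {μ : Measure Ω} {m : ℕ} {Z : Ω → Fin m → ℝ}
  {p : Fin m → ℝ}

theorem popZonoidDepth_le_one : popZonoidDepth μ Z p ≤ 1 :=
  Real.sSup_le (fun _ hα => hα.2.1) zero_le_one

theorem popZonoidDepth_eq_one_of_integral_eq [IsProbabilityMeasure μ]
    (hp : ∀ i, ∫ ω, Z ω i ∂μ = p i) : popZonoidDepth μ Z p = 1 := by
  refine popZonoidDepth_le_one.antisymm (le_csSup ⟨1, fun _ hα => hα.2.1⟩ ?_)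
  exact ⟨one_pos, le_rfl, fun _ => 1, measurable_const, fun _ => by norm_num, by simp,
    fun i => by simpa using hp i⟩

theorem exists_weight_of_lt_popZonoidDepth {t : ℝ} (ht : 0 < t) (h : t < popZonoidDepth μ Z p) :
    ∃ g : (Fin m → ℝ) → ℝ, (∀ x, 0 ≤ g x ∧ g x < 1 / t) ∧ ∫ ω, g (Z ω) ∂μ = 1 ∧
      ∀ i, ∫ ω, g (Z ω) * Z ω i ∂μ = p i := by
  rw [popZonoidDepth] at h
  obtain ⟨α, ⟨-, -, g, -, hg, hg_one, hg_mean⟩, htα⟩ := exists_lt_of_lt_csSup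
    (Set.nonempty_iff_ne_empty.2 fun hempty => by
      rw [hempty, Real.sSup_empty] at h; exact ht.not_gt h) h
  exact ⟨g, fun x => ⟨(hg x).1, (hg x).2.trans_lt (one_div_lt_one_div_of_lt ht htα)⟩,
    hg_one, hg_mean⟩

theorem integral_eq_of_popZonoidDepth_eq_one [IsProbabilityMeasure μ]
    (hZ : ∀ i, Integrable (fun ω => Z ω i) μ) (h : popZonoidDepth μ Z p = 1) (i : Fin m) :
    ∫ ω, Z ω i ∂μ = p i := by
  refine eq_of_forall_dist_le fun c hc => ?_
  obtain ⟨M, hM, htail⟩ := (hZ i).exists_integral_max_abs_sub_le (half_pos hc)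
  set δ := min 1 (c / (4 * (M + 1)))
  have hδ : 0 < δ := lt_min one_pos (by positivity)
  have hδc : δ * (4 * (M + 1)) ≤ c := (le_div_iff₀ (by positivity)).1 (min_le_right _ _)
  obtain ⟨g, hg, hg_one, hg_mean⟩ := exists_weight_of_lt_popZonoidDepth (t := 1 / (1 + δ))
    (by positivity) (h ▸ (div_lt_one (by positivity)).2 (by linarith))
  rw [one_div_one_div] at hg
  -- `∫ g ∘ Z = 1 ≠ 0` forces integrability, whether or not `Z` is measurable
  have hG : Integrable (fun ω => g (Z ω)) μ :=
    Integrable.of_integral_ne_zero (hg_one ▸ one_ne_zero)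
  set k : Ω → ℝ := fun ω => 1 - g (Z ω)
  have hk : Integrable k μ := (integrable_const 1).sub hG
  have hk_zero : ∫ ω, k ω ∂μ = 0 := by
    rw [integral_sub (integrable_const 1) hG, hg_one]; simp
  have hk_ge : ∀ ω, -δ ≤ k ω := fun ω => by linarith [(hg (Z ω)).2]
  have hk_le : ∀ ω, |k ω| ≤ 1 := fun ω =>
    abs_le.2 ⟨by linarith [(hg (Z ω)).2, min_le_left 1 (c / (4 * (M + 1)))],
      by linarith [(hg (Z ω)).1]⟩
  have hdiff : ∫ ω, Z ω i ∂μ - p i = ∫ ω, k ω * Z ω i ∂μ := by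
    rw [← hg_mean i, ← integral_sub (hZ i) ((hZ i).bdd_mul (c := 1 + δ) hG.aestronglyMeasurable
      (ae_of_all _ fun ω => by rw [Real.norm_of_nonneg (hg _).1]; exact (hg _).2.le))]
    congr 1; funext ω; ring
  rw [Real.dist_eq, hdiff]
  calc |∫ ω, k ω * Z ω i ∂μ| ≤ M * ∫ ω, |k ω| ∂μ + ∫ ω, max (|Z ω i| - M) 0 ∂μ :=
        abs_integral_mul_le_of_abs_le_one hk.aestronglyMeasurable hk_le (hZ i)
    _ ≤ M * (2 * δ) + c / 2 := by
        gcongr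
        exact integral_abs_le_two_mul_of_integral_eq_zero hk hk_zero hδ.le hk_ge
    _ ≤ c := by nlinarith

end ZonoidDepth

section LinearModel

variable {Ω : Type*} [MeasurableSpace Ω] {μ : Measure Ω} {n : ℕ} {W : Ω → Fin n → ℝ}
  {Y : Ω → ℝ}

theorem integrable_mul_of_integrable_residual_mul
    (hint : ∀ θ i, Integrable (fun ω => (Y ω - W ω ⬝ᵥ θ) * W ω i) μ) (i j : Fin n) :
    Integrable (fun ω => W ω i * W ω j) μ := by
  refine ((hint (-Pi.single j 1) i).sub (hint 0 i)).congr (ae_of_all _ fun ω => ?_)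
  simp only [Pi.sub_apply, dotProduct_neg, dotProduct_single, dotProduct_zero]
  ring

theorem integral_residual_mul_eq {S : Matrix (Fin n) (Fin n) ℝ}
    (hint : ∀ θ i, Integrable (fun ω => (Y ω - W ω ⬝ᵥ θ) * W ω i) μ)
    (hS : ∀ i j, S i j = ∫ ω, W ω i * W ω j ∂μ) (θ θ' : Fin n → ℝ) (i : Fin n) :
    ∫ ω, (Y ω - W ω ⬝ᵥ θ) * W ω i ∂μ = ∫ ω, (Y ω - W ω ⬝ᵥ θ') * W ω i ∂μ + (S *ᵥ (θ' - θ)) i := by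
  have hWW := integrable_mul_of_integrable_residual_mul hint i
  have hpt : ∀ ω, (Y ω - W ω ⬝ᵥ θ) * W ω i =
      (Y ω - W ω ⬝ᵥ θ') * W ω i + ∑ j, (θ' - θ) j * (W ω i * W ω j) := fun ω => by
    have hsum : ∑ j, (θ' - θ) j * (W ω i * W ω j) = W ω i * (W ω ⬝ᵥ θ' - W ω ⬝ᵥ θ) := by
      rw [← dotProduct_sub, dotProduct, Finset.mul_sum]
      exact Finset.sum_congr rfl fun j _ => by ring
    rw [hsum]
    ring
  rw [integral_congr_ae (ae_of_all _ hpt),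
    integral_add (hint θ' i) (integrable_finsetSum _ fun j _ => (hWW j).const_mul _),
    integral_finsetSum _ fun j _ => (hWW j).const_mul _]
  simp only [integral_const_mul, mulVec, dotProduct, hS]
  exact congrArg _ (Finset.sum_congr rfl fun j _ => mul_comm _ _)

end LinearModel

theorem stmt15_general {d : ℕ} {Ω : Type*} [MeasurableSpace Ω] (μ : Measure Ω) [IsProbabilityMeasure μ]
    (X : Ω → Fin d → ℝ) (ε : Ω → ℝ) (Y : Ω → ℝ) (θ₀ : Fin (d + 1) → ℝ)
    (hX : Measurable X)
    (W : Ω → Fin (d + 1) → ℝ) (hW : ∀ ω, W ω = Fin.cons 1 (X ω))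
    (hY : ∀ ω, Y ω = W ω ⬝ᵥ θ₀ + ε ω)
    (hcond : μ[ε | MeasurableSpace.comap X inferInstance] =ᵐ[μ] 0)
    (hint : ∀ θ : Fin (d + 1) → ℝ, ∀ i, Integrable (fun ω => (Y ω - W ω ⬝ᵥ θ) * W ω i) μ)
    (Sbar : Matrix (Fin (d + 1)) (Fin (d + 1)) ℝ)
    (hSbar : ∀ i j, Sbar i j = ∫ ω, W ω i * W ω j ∂μ)
    (hSbarpd : Sbar.PosDef) :
    (∀ θ : Fin (d + 1) → ℝ, ∀ i,
      (∫ ω, (Y ω - W ω ⬝ᵥ θ) * W ω i ∂μ) = Sbar.mulVec (θ₀ - θ) i) ∧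
    (∀ θ : Fin (d + 1) → ℝ, Sbar.mulVec (θ₀ - θ) = 0 ↔ θ = θ₀) ∧
    popZonoidDepth μ (fun ω => (Y ω - W ω ⬝ᵥ θ₀) • W ω) 0 = 1 ∧
    (∀ θ : Fin (d + 1) → ℝ, popZonoidDepth μ (fun ω => (Y ω - W ω ⬝ᵥ θ) • W ω) 0 ≤ 1) ∧
    ∀ θ : Fin (d + 1) → ℝ, popZonoidDepth μ (fun ω => (Y ω - W ω ⬝ᵥ θ) • W ω) 0 = 1 → θ = θ₀ := by
  have hresidual : ∀ ω i, (Y ω - W ω ⬝ᵥ θ₀) * W ω i = W ω i * ε ω := fun ω i => by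
    rw [hY]; ring
  have hW_meas : ∀ i, StronglyMeasurable[MeasurableSpace.comap X inferInstance]
      (fun ω => W ω i) := fun i => by
    have hcons : Continuous fun x : Fin d → ℝ => (Fin.cons 1 x : Fin (d + 1) → ℝ) :=
      continuous_const.finCons continuous_id
    simp_rw [hW]
    exact ((continuous_apply i).comp hcons).stronglyMeasurable.comp_measurable (comap_measurable X)
  have hε : Integrable ε μ :=
    (hint θ₀ 0).congr (ae_of_all _ fun ω => by dsimp only; rw [hresidual, hW]; simp)
  have hexog : ∀ i, ∫ ω, (Y ω - W ω ⬝ᵥ θ₀) * W ω i ∂μ = 0 := fun i => by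
    simp_rw [hresidual]
    exact integral_mul_eq_zero_of_condExp_eq_zero hX.comap_le (hW_meas i)
      ((hint θ₀ i).congr (ae_of_all _ fun ω => hresidual ω i)) hε hcond
  have hmean : ∀ θ i, ∫ ω, (Y ω - W ω ⬝ᵥ θ) * W ω i ∂μ = (Sbar *ᵥ (θ₀ - θ)) i := fun θ i => by
    rw [integral_residual_mul_eq hint hSbar θ θ₀ i, hexog, zero_add]
  have hident : ∀ θ, Sbar *ᵥ (θ₀ - θ) = 0 ↔ θ = θ₀ := fun θ => by
    rw [← mulVec_zero Sbar, (mulVec_injective_of_isUnit hSbarpd.isUnit).eq_iff, sub_eq_zero,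
      eq_comm]
  refine ⟨hmean, hident, popZonoidDepth_eq_one_of_integral_eq fun i => ?_,
    fun θ => popZonoidDepth_le_one, fun θ hθ => (hident θ).1 (funext fun i => ?_)⟩
  · simpa using hmean θ₀ i
  · rw [← hmean θ i]
    exact integral_eq_of_popZonoidDepth_eq_one (hint θ) hθ i

theorem stmt15 {d : ℕ} {Ω : Type*} [MeasurableSpace Ω] (μ : Measure Ω) [IsProbabilityMeasure μ]
    (X : Ω → Fin d → ℝ) (ε : Ω → ℝ) (Y : Ω → ℝ) (θ₀ : Fin (d + 1) → ℝ)
    (hX : Measurable X) (hε : Measurable ε)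
    (W : Ω → Fin (d + 1) → ℝ) (hW : ∀ ω, W ω = Fin.cons 1 (X ω))
    (hY : ∀ ω, Y ω = W ω ⬝ᵥ θ₀ + ε ω)
    (hcond : μ[ε | MeasurableSpace.comap X inferInstance] =ᵐ[μ] 0)
    (hint : ∀ θ : Fin (d + 1) → ℝ, ∀ i, Integrable (fun ω => (Y ω - W ω ⬝ᵥ θ) * W ω i) μ)
    (Sbar : Matrix (Fin (d + 1)) (Fin (d + 1)) ℝ)
    (hSbar : ∀ i j, Sbar i j = ∫ ω, W ω i * W ω j ∂μ)
    (hSbarpd : Sbar.PosDef) :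
    (∀ θ : Fin (d + 1) → ℝ, ∀ i,
      (∫ ω, (Y ω - W ω ⬝ᵥ θ) * W ω i ∂μ) = Sbar.mulVec (θ₀ - θ) i) ∧
    (∀ θ : Fin (d + 1) → ℝ, Sbar.mulVec (θ₀ - θ) = 0 ↔ θ = θ₀) ∧
    popZonoidDepth μ (fun ω => (Y ω - W ω ⬝ᵥ θ₀) • W ω) 0 = 1 ∧
    (∀ θ : Fin (d + 1) → ℝ, popZonoidDepth μ (fun ω => (Y ω - W ω ⬝ᵥ θ) • W ω) 0 ≤ 1) ∧
    ∀ θ : Fin (d + 1) → ℝ, popZonoidDepth μ (fun ω => (Y ω - W ω ⬝ᵥ θ) • W ω) 0 = 1 → θ = θ₀ :=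
  stmt15_general μ X ε Y θ₀ hX W hW hY hcond hint Sbar hSbar hSbarpd
end
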